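/- arXiv:2512.21843 — 3 statements merged into one kernel-verified Lean document; each statement's English description precedes it below -/
import Mathlib

section
/- Let A be bounded self-adjoint invertible, B bounded invertible, both on a Hilbert space H, and suppose gap(A)² + gap(B)² > ‖[A,B]‖. Then the block operator L = [[A, B*],[B, −A]] on H ⊕ H is invertible with gap(L) ≥ sqrt(gap(A)² + gap(B)² − ‖[A,B]‖). -/
open ContinuousLinearMap

noncomputable def gap {H : Type*} [NormedAddCommGroup H] [InnerProductSpace ℂ H]
    [CompleteSpace H] (T : H →L[ℂ] H) : ℝ := ‖Ring.inverse T‖⁻¹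


variable {H K : Type*} [NormedAddCommGroup H] [InnerProductSpace ℂ H] [CompleteSpace H]
  [NormedAddCommGroup K] [InnerProductSpace ℂ K] [CompleteSpace K]

/-- The block operator `[[A, B],[C, D]]` on the Hilbert space `H ⊕₂ K`. -/
noncomputable def blockOp (A : H →L[ℂ] H) (B : K →L[ℂ] H) (C : H →L[ℂ] K) (D : K →L[ℂ] K) :
    WithLp 2 (H × K) →L[ℂ] WithLp 2 (H × K) :=
  letI e := WithLp.prodContinuousLinearEquiv 2 ℂ H K
  (e.symm : H × K →L[ℂ] WithLp 2 (H × K)) ∘L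
    ((A ∘L ContinuousLinearMap.fst ℂ H K + B ∘L ContinuousLinearMap.snd ℂ H K).prod
      (C ∘L ContinuousLinearMap.fst ℂ H K + D ∘L ContinuousLinearMap.snd ℂ H K)) ∘L
    (e : WithLp 2 (H × K) →L[ℂ] H × K)

set_option maxHeartbeats 1000000

lemma gap_mul_le {H : Type*} [NormedAddCommGroup H] [InnerProductSpace ℂ H] [CompleteSpace H]
    (T : H →L[ℂ] H) (hT : IsUnit T) (x : H) : gap T * ‖x‖ ≤ ‖T x‖ := by
  have h1 : Ring.inverse T (T x) = x := by
    rw [← ContinuousLinearMap.mul_apply, Ring.inverse_mul_cancel T hT,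
      ContinuousLinearMap.one_apply]
  have h2 : ‖x‖ ≤ ‖Ring.inverse T‖ * ‖T x‖ := by
    conv_lhs => rw [← h1]
    exact (Ring.inverse T).le_opNorm (T x)
  rcases eq_or_lt_of_le (norm_nonneg (Ring.inverse T)) with h | h
  · simp [gap, ← h]
  · rw [gap, inv_mul_le_iff₀ h]; linarith [mul_comm ‖Ring.inverse T‖ ‖T x‖]

lemma gap_adjoint {H : Type*} [NormedAddCommGroup H] [InnerProductSpace ℂ H] [CompleteSpace H]
    (B : H →L[ℂ] H) : gap (ContinuousLinearMap.adjoint B) = gap B := by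
  rw [gap, gap, ← ContinuousLinearMap.star_eq_adjoint, Ring.inverse_star, norm_star]

lemma gap_nonneg {H : Type*} [NormedAddCommGroup H] [InnerProductSpace ℂ H] [CompleteSpace H]
    (T : H →L[ℂ] H) : 0 ≤ gap T := by rw [gap]; positivity

/-- Gap lower bound for the traceless block operator `L = [[A,B*],[B,−A]]`:
if `gap(A)² + gap(B)² > ‖[A,B]‖` then `L` is invertible with
`gap(L) ≥ sqrt(gap(A)² + gap(B)² − ‖[A,B]‖)`. -/
theorem gap_block_traceless {H : Type*} [NormedAddCommGroup H] [InnerProductSpace ℂ H]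
    [CompleteSpace H] (A B : H →L[ℂ] H) (hA : IsSelfAdjoint A)
    (hAu : IsUnit A) (hBu : IsUnit B)
    (hcomm : ‖A * B - B * A‖ < gap A ^ 2 + gap B ^ 2) :
    IsUnit (blockOp A (ContinuousLinearMap.adjoint B) B (-A)) ∧
      Real.sqrt (gap A ^ 2 + gap B ^ 2 - ‖A * B - B * A‖) ≤
        gap (blockOp A (ContinuousLinearMap.adjoint B) B (-A)) := by
  rcases subsingleton_or_nontrivial H with hns | hns
  · exfalso
    have h1 : gap A = 0 := by
      have : Ring.inverse A = 0 := Subsingleton.elim _ _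
      simp [gap, this]
    have h2 : gap B = 0 := by
      have : Ring.inverse B = 0 := Subsingleton.elim _ _
      simp [gap, this]
    rw [h1, h2] at hcomm
    have h3 : (A * B - B * A) = 0 := Subsingleton.elim _ _
    rw [h3] at hcomm; simp at hcomm
  set L := blockOp A (ContinuousLinearMap.adjoint B) B (-A) with hL
  set C := ‖A * B - B * A‖ with hC
  set d := gap A ^ 2 + gap B ^ 2 - C with hd
  have hdpos : 0 < d := by rw [hd]; linarith
  set γ := Real.sqrt d with hγ
  have hγpos : 0 < γ := Real.sqrt_pos.mpr hdpos
  have hγsq : γ ^ 2 = d := Real.sq_sqrt hdpos.le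
  have hBadj : IsUnit (ContinuousLinearMap.adjoint B) := by
    rw [← ContinuousLinearMap.star_eq_adjoint]; exact hBu.star
  -- the key lower bound
  have key : ∀ x : WithLp 2 (H × H), γ * ‖x‖ ≤ ‖L x‖ := by
    intro x
    set u := x.fst with hu
    set v := x.snd with hv
    have hLf : (L x).fst = A u + ContinuousLinearMap.adjoint B v := rfl
    have hLs : (L x).snd = B u + (-A) v := rfl
    have hsq : d * ‖x‖ ^ 2 ≤ ‖L x‖ ^ 2 := by
      rw [WithLp.prod_norm_sq_eq_of_L2, WithLp.prod_norm_sq_eq_of_L2, hLf, hLs]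
      have e1 : ‖A u + ContinuousLinearMap.adjoint B v‖ ^ 2
          = ‖A u‖ ^ 2 + 2 * RCLike.re (inner ℂ (B (A u)) v : ℂ)
            + ‖ContinuousLinearMap.adjoint B v‖ ^ 2 := by
        rw [norm_add_sq (𝕜 := ℂ), ContinuousLinearMap.adjoint_inner_right]
      have e2 : ‖B u + (-A) v‖ ^ 2
          = ‖B u‖ ^ 2 - 2 * RCLike.re (inner ℂ (A (B u)) v : ℂ) + ‖A v‖ ^ 2 := by
        have : (-A) v = -(A v) := rfl
        rw [this, ← sub_eq_add_neg, norm_sub_sq (𝕜 := ℂ)]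
        congr 2
        rw [← ContinuousLinearMap.adjoint_inner_left, hA.adjoint_eq]
      rw [e1, e2]
      -- cross term
      have hw : B (A u) - A (B u) = -((A * B - B * A) u) := by
        simp [ContinuousLinearMap.sub_apply, ContinuousLinearMap.mul_apply]
      have hcross : RCLike.re (inner ℂ (B (A u)) v : ℂ) - RCLike.re (inner ℂ (A (B u)) v : ℂ)
          = - RCLike.re (inner ℂ ((A * B - B * A) u) v : ℂ) := by
        rw [← map_sub, ← inner_sub_left, hw, inner_neg_left, map_neg]
      have hbound : RCLike.re (inner ℂ ((A * B - B * A) u) v : ℂ) ≤ C * ‖u‖ * ‖v‖ := by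
        calc RCLike.re (inner ℂ ((A * B - B * A) u) v : ℂ) ≤ ‖(A * B - B * A) u‖ * ‖v‖ :=
              re_inner_le_norm _ _
          _ ≤ C * ‖u‖ * ‖v‖ := by
              apply mul_le_mul_of_nonneg_right _ (norm_nonneg v)
              exact (A * B - B * A).le_opNorm u
      have b1 : gap A * ‖u‖ ≤ ‖A u‖ := gap_mul_le A hAu u
      have b2 : gap B * ‖u‖ ≤ ‖B u‖ := gap_mul_le B hBu u
      have b3 : gap A * ‖v‖ ≤ ‖A v‖ := gap_mul_le A hAu v
      have b4 : gap B * ‖v‖ ≤ ‖ContinuousLinearMap.adjoint B v‖ := by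
        have := gap_mul_le (ContinuousLinearMap.adjoint B) hBadj v
        rwa [gap_adjoint] at this
      have hCnn : 0 ≤ C := norm_nonneg _
      have hga : 0 ≤ gap A := gap_nonneg A
      have hgb : 0 ≤ gap B := gap_nonneg B
      have q1 : (gap A * ‖u‖) ^ 2 ≤ ‖A u‖ ^ 2 :=
        pow_le_pow_left₀ (by positivity) b1 2
      have q2 : (gap B * ‖u‖) ^ 2 ≤ ‖B u‖ ^ 2 :=
        pow_le_pow_left₀ (by positivity) b2 2
      have q3 : (gap A * ‖v‖) ^ 2 ≤ ‖A v‖ ^ 2 :=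
        pow_le_pow_left₀ (by positivity) b3 2
      have q4 : (gap B * ‖v‖) ^ 2 ≤ ‖ContinuousLinearMap.adjoint B v‖ ^ 2 :=
        pow_le_pow_left₀ (by positivity) b4 2
      have main : (gap A ^ 2 + gap B ^ 2 - C) * (‖u‖ ^ 2 + ‖v‖ ^ 2) ≤
          ‖A u‖ ^ 2 + ‖ContinuousLinearMap.adjoint B v‖ ^ 2 + ‖B u‖ ^ 2 + ‖A v‖ ^ 2
            - 2 * RCLike.re (inner ℂ ((A * B - B * A) u) v : ℂ) := by
        linarith [q1, q2, q3, q4, hbound, mul_nonneg hCnn (sq_nonneg (‖u‖ - ‖v‖)), sq_nonneg (‖u‖ - ‖v‖)]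
      rw [hd]
      linarith [main, hcross]
    have h := Real.sqrt_le_sqrt hsq
    rw [Real.sqrt_mul hdpos.le, Real.sqrt_sq (norm_nonneg x),
      Real.sqrt_sq (norm_nonneg (L x))] at h
    exact h
  -- L is symmetric
  have hsymm : ∀ x y : WithLp 2 (H × H), (inner ℂ (L x) y : ℂ) = inner ℂ x (L y) := by
    intro x y
    have hLfx : (L x).fst = A x.fst + ContinuousLinearMap.adjoint B x.snd := rfl
    have hLsx : (L x).snd = B x.fst + (-A) x.snd := rfl
    have hLfy : (L y).fst = A y.fst + ContinuousLinearMap.adjoint B y.snd := rfl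
    have hLsy : (L y).snd = B y.fst + (-A) y.snd := rfl
    rw [WithLp.prod_inner_apply, WithLp.prod_inner_apply]
    change inner ℂ (L x).fst y.fst + inner ℂ (L x).snd y.snd = inner ℂ x.fst (L y).fst + inner ℂ x.snd (L y).snd
    rw [hLfx, hLsx, hLfy, hLsy]
    have hnx : ((-A) x.snd : H) = -(A x.snd) := rfl
    have hny : ((-A) y.snd : H) = -(A y.snd) := rfl
    rw [hnx, hny]
    simp only [inner_add_left, inner_add_right, inner_neg_left, inner_neg_right]
    have a1 : (inner ℂ (A x.fst) y.fst : ℂ) = inner ℂ x.fst (A y.fst) := by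
      rw [← ContinuousLinearMap.adjoint_inner_left, hA.adjoint_eq]
    have a2 : (inner ℂ (ContinuousLinearMap.adjoint B x.snd) y.fst : ℂ)
        = inner ℂ x.snd (B y.fst) := by
      rw [← ContinuousLinearMap.adjoint_inner_right, ContinuousLinearMap.adjoint_adjoint]
    have a3 : (inner ℂ (B x.fst) y.snd : ℂ) = inner ℂ x.fst (ContinuousLinearMap.adjoint B y.snd) :=
      (ContinuousLinearMap.adjoint_inner_right B x.fst y.snd).symm
    have a4 : (inner ℂ (A x.snd) y.snd : ℂ) = inner ℂ x.snd (A y.snd) := by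
      rw [← ContinuousLinearMap.adjoint_inner_left, hA.adjoint_eq]
    rw [a1, a2, a3, a4]; ring
  -- injectivity as a statement
  have hinj : ∀ x : WithLp 2 (H × H), L x = 0 → x = 0 := by
    intro x hx
    have h1 := key x
    rw [hx, norm_zero] at h1
    have h2 : ‖x‖ ≤ 0 := by nlinarith
    exact norm_le_zero_iff.mp h2
  have hker : L.ker = ⊥ := by
    rw [Submodule.eq_bot_iff]
    intro x hx
    exact hinj x (LinearMap.mem_ker.mp hx)
  -- closed range
  have hanti : AntilipschitzWith ⟨γ⁻¹, by positivity⟩ L := by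
    apply ContinuousLinearMap.antilipschitz_of_bound
    intro x
    change ‖x‖ ≤ γ⁻¹ * ‖L x‖
    rw [inv_mul_eq_div, le_div_iff₀ hγpos]
    linarith [key x]
  have hclosed : IsClosed (Set.range L) := hanti.isClosed_range L.uniformContinuous
  have hclosed' : IsClosed ((L.range : Submodule ℂ (WithLp 2 (H × H)))
      : Set (WithLp 2 (H × H))) := by
    have : ((L.range : Submodule ℂ (WithLp 2 (H × H)))
        : Set (WithLp 2 (H × H))) = Set.range L := by
      ext z; simp [LinearMap.mem_range]
    rw [this]; exact hclosed
  haveI : CompleteSpace (L.range : Submodule ℂ (WithLp 2 (H × H))) :=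
    hclosed'.completeSpace_coe
  -- dense range
  have hrange : L.range = ⊤ := by
    rw [← Submodule.orthogonal_eq_bot_iff]
    rw [Submodule.eq_bot_iff]
    intro y hy
    rw [Submodule.mem_orthogonal] at hy
    have hy' : ∀ x : WithLp 2 (H × H), (inner ℂ x (L y) : ℂ) = 0 := by
      intro x
      rw [← hsymm x y]
      exact hy (L x) (LinearMap.mem_range_self _ x)
    have : L y = 0 := by
      have := hy' (L y)
      rwa [inner_self_eq_zero] at this
    exact hinj y this
  -- the inverse
  set e := ContinuousLinearEquiv.ofBijective L hker hrange with he
  have heL : ∀ z, L z = e z := by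
    intro z
    rw [he, ContinuousLinearEquiv.coeFn_ofBijective]
  have hunit : IsUnit L := by
    refine ⟨⟨L, (e.symm : WithLp 2 (H × H) →L[ℂ] WithLp 2 (H × H)), ?_, ?_⟩, rfl⟩
    · ext z
      rw [ContinuousLinearMap.mul_apply, ContinuousLinearMap.one_apply,
        ContinuousLinearEquiv.coe_coe, heL, e.apply_symm_apply]
    · ext z
      rw [ContinuousLinearMap.mul_apply, ContinuousLinearMap.one_apply,
        ContinuousLinearEquiv.coe_coe, heL, e.symm_apply_apply]
  refine ⟨hunit, ?_⟩
  -- compute the inverse and its norm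
  have hinvL : Ring.inverse L * L = 1 := Ring.inverse_mul_cancel L hunit
  have hLinv : L * Ring.inverse L = 1 := Ring.mul_inverse_cancel L hunit
  have hnorm : ‖Ring.inverse L‖ ≤ γ⁻¹ := by
    apply ContinuousLinearMap.opNorm_le_bound _ (by positivity)
    intro y
    have h1 : L (Ring.inverse L y) = y := by
      rw [← ContinuousLinearMap.mul_apply, hLinv, ContinuousLinearMap.one_apply]
    have h2 := key (Ring.inverse L y)
    rw [h1] at h2
    rw [inv_mul_eq_div, le_div_iff₀ hγpos]
    linarith
  have hinvne : Ring.inverse L ≠ 0 := by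
    intro h0
    rw [h0, mul_zero] at hLinv
    haveI : Nontrivial (WithLp 2 (H × H)) := by
      obtain ⟨a, b, hab⟩ := exists_pair_ne H
      exact ⟨(WithLp.equiv 2 (H × H)).symm (a, 0), (WithLp.equiv 2 (H × H)).symm (b, 0),
        fun h => hab (congrArg (fun z => ((WithLp.equiv 2 (H × H)) z).1) h)⟩
    obtain ⟨z, hz⟩ := exists_ne (0 : WithLp 2 (H × H))
    apply hz
    calc z = (1 : WithLp 2 (H × H) →L[ℂ] WithLp 2 (H × H)) z := rfl
      _ = (0 : WithLp 2 (H × H) →L[ℂ] WithLp 2 (H × H)) z := by rw [← hLinv]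
      _ = 0 := rfl
  have hpos : 0 < ‖Ring.inverse L‖ := norm_pos_iff.mpr hinvne
  rw [gap]
  calc γ = (γ⁻¹)⁻¹ := (inv_inv γ).symm
    _ ≤ ‖Ring.inverse L‖⁻¹ := by
        apply inv_anti₀ hpos hnorm
end

section
/- Let H = [[A,B],[B*,D]] be self-adjoint with A, D invertible and gap(A) ≤ gap(D). Then gap(H) ≥ gap(A) − sqrt(gap(A)/gap(D))·‖B‖. -/
open ContinuousLinearMap

variable {H K : Type*} [NormedAddCommGroup H] [InnerProductSpace ℂ H] [CompleteSpace H]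
  [NormedAddCommGroup K] [InnerProductSpace ℂ K] [CompleteSpace K]

/-! ### Auxiliary scalar lemmas -/

lemma aux_quad_nonneg (c₁ c₂ c₃ p q : ℝ) (h1 : 0 ≤ c₁) (h3 : 0 ≤ c₃) (h2 : 0 ≤ c₂)
    (hdet : c₂^2 ≤ c₁*c₃) (hp : 0 ≤ p) (hq : 0 ≤ q) :
    2*c₂*p*q ≤ c₁*p^2 + c₃*q^2 := by
  have hsq : c₂ ≤ Real.sqrt c₁ * Real.sqrt c₃ := by
    rw [← Real.sqrt_mul h1]
    exact (Real.le_sqrt h2 (by positivity)).mpr hdet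
  nlinarith [sq_nonneg (Real.sqrt c₁ * p - Real.sqrt c₃ * q), Real.sq_sqrt h1,
    Real.sq_sqrt h3, mul_nonneg hp hq, Real.sqrt_nonneg c₁, Real.sqrt_nonneg c₃]

lemma aux_key2 (s d b p q : ℝ) (hs : 0 < s) (hs1 : s ≤ 1) (hd : 0 < d) (hb : 0 ≤ b)
    (hp : 0 ≤ p) (hq : 0 ≤ q) :
    s^2*((d*p+b*q)^2 + (b*p+s^2*d*q)^2) ≤ (s*d+b)^2*(p^2+q^2) := by
  have hs2 : s^2 ≤ 1 := by nlinarith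
  have h4 : 0 ≤ 1 - s^4 := by nlinarith
  have h12 : 0 ≤ 1 - s^2 := by linarith
  have he : s^2*d*(1+s^2) ≤ 2*s*d + b*(1-s^2) := by
    nlinarith [mul_nonneg hb h12, mul_pos hs hd, mul_nonneg (mul_nonneg hs.le hd.le) h12,
      mul_nonneg (mul_nonneg (mul_nonneg hs.le hs.le) hd.le) (by nlinarith : (0:ℝ) ≤ 1 - s^2)]
  have h1 : 0 ≤ 2*s*d*b + b^2*(1-s^2) := by
    have := mul_nonneg (mul_nonneg (mul_pos hs hd).le hb) (by norm_num : (0:ℝ) ≤ 2)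
    nlinarith [mul_nonneg (sq_nonneg b) h12]
  have he1 : 0 ≤ 2*s*d + b*(1-s^2) := by nlinarith [mul_pos hs hd, mul_nonneg hb h12]
  have h3 : 0 ≤ s^2*d^2*(1-s^4) + 2*s*d*b + b^2*(1-s^2) := by
    have t := mul_nonneg (mul_nonneg (sq_nonneg s) (sq_nonneg d)) h4
    nlinarith [mul_nonneg (mul_nonneg (mul_pos hs hd).le hb) (by norm_num : (0:ℝ) ≤ 2),
      mul_nonneg (sq_nonneg b) h12]
  have h2 : 0 ≤ s^2*d*b*(1+s^2) := by positivity
  have hdet : (s^2*d*b*(1+s^2))^2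
      ≤ (2*s*d*b + b^2*(1-s^2)) * (s^2*d^2*(1-s^4) + 2*s*d*b + b^2*(1-s^2)) := by
    have t1 : 0 ≤ b*((2*s*d + b*(1-s^2))*(s^2*d^2*(1-s^4))) :=
      mul_nonneg hb (mul_nonneg he1 (mul_nonneg (mul_nonneg (sq_nonneg s) (sq_nonneg d)) h4))
    have t2 : 0 ≤ b^2*(((2*s*d + b*(1-s^2)) - s^2*d*(1+s^2))*((2*s*d + b*(1-s^2)) + s^2*d*(1+s^2))) :=
      mul_nonneg (sq_nonneg b) (mul_nonneg (by linarith)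
        (by nlinarith [mul_pos hs hd, mul_nonneg hb h12,
          mul_nonneg (mul_nonneg (sq_nonneg s) hd.le) (by positivity : (0:ℝ) ≤ 1 + s^2)]))
    nlinarith [t1, t2]
  have key := aux_quad_nonneg _ _ _ p q h1 h3 h2 hdet hp hq
  nlinarith [key]

lemma aux_key (a d b p q : ℝ) (ha : 0 < a) (had : a ≤ d) (hb : 0 ≤ b)
    (hp : 0 ≤ p) (hq : 0 ≤ q) :
    (a - Real.sqrt (a/d) * b)^2 * ((d*p+b*q)^2 + (b*p+a*q)^2)
      ≤ (a*d - b^2)^2 * (p^2+q^2) := by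
  have hd : 0 < d := lt_of_lt_of_le ha had
  set s := Real.sqrt (a/d) with hs_def
  have hs : 0 < s := Real.sqrt_pos.2 (by positivity)
  have hs2 : s^2 = a/d := Real.sq_sqrt (by positivity)
  have ha' : a = s^2*d := by rw [hs2]; field_simp
  have hs1 : s ≤ 1 := by
    have h1 : s^2 ≤ 1 := by rw [hs2]; exact (div_le_one hd).2 had
    nlinarith
  have h := mul_le_mul_of_nonneg_left (aux_key2 s d b p q hs hs1 hd hb hp hq)
    (sq_nonneg (s*d - b))
  calc (a - s*b)^2 * ((d*p+b*q)^2 + (b*p+a*q)^2)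
      = (s*d-b)^2 * (s^2*((d*p+b*q)^2 + (b*p+s^2*d*q)^2)) := by rw [ha']; ring
    _ ≤ (s*d-b)^2 * ((s*d+b)^2*(p^2+q^2)) := h
    _ = (a*d - b^2)^2 * (p^2+q^2) := by rw [ha']; ring

/-! ### Auxiliary block-operator lemmas -/

lemma blockOp_fst (A : H →L[ℂ] H) (B : K →L[ℂ] H) (C : H →L[ℂ] K) (D : K →L[ℂ] K)
    (x : WithLp 2 (H × K)) : (blockOp A B C D x).fst = A x.fst + B x.snd := rfl

lemma blockOp_snd (A : H →L[ℂ] H) (B : K →L[ℂ] H) (C : H →L[ℂ] K) (D : K →L[ℂ] K)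
    (x : WithLp 2 (H × K)) : (blockOp A B C D x).snd = C x.fst + D x.snd := rfl

lemma aux_comp_norm_le {E F G : Type*} [NormedAddCommGroup E] [NormedSpace ℂ E]
    [NormedAddCommGroup F] [NormedSpace ℂ F] [NormedAddCommGroup G] [NormedSpace ℂ G]
    (f : F →L[ℂ] G) (g : E →L[ℂ] F) {x y : ℝ} (hf : ‖f‖ ≤ x) (hg : ‖g‖ ≤ y) :
    ‖f ∘L g‖ ≤ x * y :=
  (opNorm_comp_le f g).trans
    (mul_le_mul hf hg (norm_nonneg _) ((norm_nonneg f).trans hf))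

lemma blockOp_bound (P : H →L[ℂ] H) (Q : K →L[ℂ] H) (R : H →L[ℂ] K) (T : K →L[ℂ] K)
    {α β β' γ C : ℝ} (hP : ‖P‖ ≤ α) (hQ : ‖Q‖ ≤ β) (hR : ‖R‖ ≤ β') (hT : ‖T‖ ≤ γ)
    (hC : 0 ≤ C)
    (hkey : ∀ p q : ℝ, 0 ≤ p → 0 ≤ q →
      (α*p+β*q)^2 + (β'*p+γ*q)^2 ≤ C^2*(p^2+q^2)) :
    ‖blockOp P Q R T‖ ≤ C := by
  refine opNorm_le_bound _ hC fun x => ?_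
  have hfst : ‖P x.fst + Q x.snd‖ ≤ α*‖x.fst‖ + β*‖x.snd‖ :=
    (norm_add_le _ _).trans (add_le_add
      ((le_opNorm _ _).trans (mul_le_mul_of_nonneg_right hP (norm_nonneg _)))
      ((le_opNorm _ _).trans (mul_le_mul_of_nonneg_right hQ (norm_nonneg _))))
  have hsnd : ‖R x.fst + T x.snd‖ ≤ β'*‖x.fst‖ + γ*‖x.snd‖ :=
    (norm_add_le _ _).trans (add_le_add
      ((le_opNorm _ _).trans (mul_le_mul_of_nonneg_right hR (norm_nonneg _)))
      ((le_opNorm _ _).trans (mul_le_mul_of_nonneg_right hT (norm_nonneg _))))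
  have h2 : ‖blockOp P Q R T x‖^2 ≤ (C*‖x‖)^2 := by
    rw [WithLp.prod_norm_sq_eq_of_L2, blockOp_fst, blockOp_snd]
    calc ‖P x.fst + Q x.snd‖^2 + ‖R x.fst + T x.snd‖^2
        ≤ (α*‖x.fst‖ + β*‖x.snd‖)^2 + (β'*‖x.fst‖ + γ*‖x.snd‖)^2 :=
          add_le_add (pow_le_pow_left₀ (norm_nonneg _) hfst 2)
            (pow_le_pow_left₀ (norm_nonneg _) hsnd 2)
      _ ≤ C^2*(‖x.fst‖^2 + ‖x.snd‖^2) := hkey _ _ (norm_nonneg _) (norm_nonneg _)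
      _ = (C*‖x‖)^2 := by rw [mul_pow, WithLp.prod_norm_sq_eq_of_L2]
  calc ‖blockOp P Q R T x‖ = Real.sqrt (‖blockOp P Q R T x‖^2) :=
        (Real.sqrt_sq (norm_nonneg _)).symm
    _ ≤ Real.sqrt ((C*‖x‖)^2) := Real.sqrt_le_sqrt h2
    _ = C*‖x‖ := Real.sqrt_sq (by positivity)

set_option maxHeartbeats 2000000 in
/-- For `H = [[A,B],[B*,D]]` with `A, D` self-adjoint invertible and
`gap(A) ≤ gap(D)`, one has `gap(H) ≥ gap(A) − sqrt(gap(A)/gap(D))·‖B‖`. -/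
theorem gap_block_lower_sqrt (A : H →L[ℂ] H) (D : K →L[ℂ] K) (B : K →L[ℂ] H)
    (hA : IsSelfAdjoint A) (hD : IsSelfAdjoint D) (hAu : IsUnit A) (hDu : IsUnit D)
    (hAD : gap A ≤ gap D) :
    gap A - Real.sqrt (gap A / gap D) * ‖B‖ ≤
      gap (blockOp A B (ContinuousLinearMap.adjoint B) D) := by
  rcases le_or_gt (gap A - Real.sqrt (gap A / gap D) * ‖B‖) 0 with h0 | ht
  · exact h0.trans (inv_nonneg.2 (norm_nonneg _))
  set a := gap A with ha_def
  set d := gap D with hd_def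
  set b := ‖B‖ with hb_def
  set s := Real.sqrt (a / d) with hs_def
  have hb : 0 ≤ b := norm_nonneg B
  have hs0 : 0 ≤ s := Real.sqrt_nonneg _
  have hsb0 : 0 ≤ s * b := mul_nonneg hs0 hb
  have ha : 0 < a := by linarith
  have hd : 0 < d := lt_of_lt_of_le ha hAD
  have hs2 : s^2 = a/d := Real.sq_sqrt (by positivity)
  have hsb : s*b < a := by linarith
  have hb2 : b^2 < a*d := by
    have h1 : s^2*b^2 < a^2 := by nlinarith
    rw [hs2] at h1
    have h2 : a*b^2 < a^2*d := by
      rw [div_mul_eq_mul_div, div_lt_iff₀ hd] at h1; linarith [h1]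
    exact lt_of_mul_lt_mul_left (by linarith [h2]) ha.le
  have hΔ : 0 < a*d - b^2 := by linarith
  set Δ := a*d - b^2 with hΔ_def
  clear_value a d b s Δ
  have ha0 : a ≠ 0 := ne_of_gt ha
  have hd0 : d ≠ 0 := ne_of_gt hd
  have hΔ0 : Δ ≠ 0 := ne_of_gt hΔ
  -- inverses of A and D
  set A' : H →L[ℂ] H := ↑hAu.unit⁻¹ with hA'_def
  set D' : K →L[ℂ] K := ↑hDu.unit⁻¹ with hD'_def
  have hRA : Ring.inverse A = A' := by
    conv_lhs => rw [← hAu.unit_spec]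
    exact Ring.inverse_unit _
  have hRD : Ring.inverse D = D' := by
    conv_lhs => rw [← hDu.unit_spec]
    exact Ring.inverse_unit _
  have hnA' : ‖A'‖ = a⁻¹ := by
    rw [ha_def, show gap A = ‖Ring.inverse A‖⁻¹ from rfl, hRA, inv_inv]
  have hnD' : ‖D'‖ = d⁻¹ := by
    rw [hd_def, show gap D = ‖Ring.inverse D‖⁻¹ from rfl, hRD, inv_inv]
  set Bt : H →L[ℂ] K := ContinuousLinearMap.adjoint B with hBt_def
  have hnBt : ‖Bt‖ = b := by
    rw [hb_def]; exact LinearIsometryEquiv.norm_map ContinuousLinearMap.adjoint B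
  -- the Schur complement S = A - B D' B† is invertible
  set E : H →L[ℂ] H := B ∘L (D' ∘L Bt) with hE_def
  have hnE : ‖E‖ ≤ b * (d⁻¹ * b) :=
    aux_comp_norm_le _ _ hb_def.ge (aux_comp_norm_le _ _ hnD'.le hnBt.le)
  set X : H →L[ℂ] H := A' * E with hX_def
  have hnX : ‖X‖ ≤ b^2/(a*d) := by
    calc ‖A' * E‖ ≤ ‖A'‖ * ‖E‖ := norm_mul_le _ _
      _ ≤ a⁻¹ * (b * (d⁻¹ * b)) := by
          rw [hnA']
          exact mul_le_mul_of_nonneg_left hnE (inv_nonneg.2 ha.le)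
      _ = b^2/(a*d) := by field_simp
  have hX1 : ‖X‖ < 1 := hnX.trans_lt ((div_lt_one (mul_pos ha hd)).2 hb2)
  set uS : (H →L[ℂ] H)ˣ := hAu.unit * Units.oneSub X hX1 with huS_def
  set Sop : H →L[ℂ] H := A - E with hSop_def
  have huSval : (uS : H →L[ℂ] H) = Sop := by
    have hAA' : A * A' = 1 := hAu.mul_val_inv
    calc (uS : H →L[ℂ] H) = A * (1 - X) := by
          rw [huS_def, Units.val_mul, hAu.unit_spec, Units.val_oneSub]
      _ = A - A * (A' * E) := by rw [mul_sub, mul_one]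
      _ = A - E := by rw [← mul_assoc, hAA', one_mul]
      _ = Sop := rfl
  set S' : H →L[ℂ] H := ↑uS⁻¹ with hS'_def
  -- norm bound for S'
  have hnS' : ‖S'‖ ≤ d/Δ := by
    have h1 : ‖((Units.oneSub X hX1)⁻¹ : (H →L[ℂ] H)ˣ).val‖ ≤ (1 - b^2/(a*d))⁻¹ := by
      have e1 : ((Units.oneSub X hX1)⁻¹ : (H →L[ℂ] H)ˣ).val = ∑' n : ℕ, X ^ n := rfl
      have e2 := tsum_geometric_le_of_norm_lt_one X hX1
      have e3 : ‖(1 : H →L[ℂ] H)‖ ≤ 1 := by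
        rw [ContinuousLinearMap.one_def]; exact ContinuousLinearMap.norm_id_le
      have e4 : (1 - ‖X‖)⁻¹ ≤ (1 - b^2/(a*d))⁻¹ := by
        apply inv_anti₀
        · have := (div_lt_one (show (0:ℝ) < a*d by positivity)).2 hb2; linarith
        · linarith
      rw [e1]; linarith
    calc ‖S'‖ = ‖(((Units.oneSub X hX1)⁻¹ : (H →L[ℂ] H)ˣ) : H →L[ℂ] H) * A'‖ := by
          rw [hS'_def, huS_def, mul_inv_rev]; rfl
      _ ≤ ‖(((Units.oneSub X hX1)⁻¹ : (H →L[ℂ] H)ˣ) : H →L[ℂ] H)‖ * ‖A'‖ := norm_mul_le _ _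
      _ ≤ (1 - b^2/(a*d))⁻¹ * a⁻¹ := by
          rw [hnA']
          exact mul_le_mul_of_nonneg_right h1 (inv_nonneg.2 ha.le)
      _ = d/Δ := by
          have hne : a*d - b^2 ≠ 0 := by rw [← hΔ_def]; exact hΔ0
          rw [hΔ_def]
          rw [show (1 : ℝ) - b^2/(a*d) = (a*d - b^2)/(a*d) by field_simp, inv_div]
          field_simp
  -- explicit inverse of the block operator
  set G : WithLp 2 (H × K) →L[ℂ] WithLp 2 (H × K) :=
    blockOp S' (-(S' ∘L (B ∘L D'))) (-(D' ∘L (Bt ∘L S')))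
      (D' + D' ∘L (Bt ∘L (S' ∘L (B ∘L D')))) with hG_def
  -- pointwise identities
  have hSS' : ∀ w : H, Sop (S' w) = w := fun w => by
    have h := uS.mul_inv
    rw [huSval] at h
    rw [← ContinuousLinearMap.mul_apply, show (uS⁻¹ : (H→L[ℂ]H)ˣ).val = S' from rfl] at *
    rw [← hS'_def] at h ⊢
    rw [h, ContinuousLinearMap.one_apply]
  have hS'S : ∀ w : H, S' (Sop w) = w := fun w => by
    have h := uS.inv_mul
    rw [huSval, show (uS⁻¹ : (H→L[ℂ]H)ˣ).val = S' from rfl] at h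
    rw [← ContinuousLinearMap.mul_apply, h, ContinuousLinearMap.one_apply]
  have hDD' : ∀ w : K, D (D' w) = w := fun w => by
    have h : D * D' = 1 := hDu.mul_val_inv
    rw [← ContinuousLinearMap.mul_apply, h, ContinuousLinearMap.one_apply]
  have hD'D : ∀ w : K, D' (D w) = w := fun w => by
    have h : D' * D = 1 := hDu.val_inv_mul
    rw [← ContinuousLinearMap.mul_apply, h, ContinuousLinearMap.one_apply]
  have hAw : ∀ z : H, A z = Sop z + B (D' (Bt z)) := fun z => by
    rw [hSop_def, hE_def]
    simp [ContinuousLinearMap.sub_apply, ContinuousLinearMap.comp_apply]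
  -- G is a two-sided inverse
  have h1 : blockOp A B Bt D * G = 1 := by
    refine ContinuousLinearMap.ext fun x => (WithLp.ext_iff 2).2 (Prod.ext ?_ ?_)
    · show (blockOp A B Bt D (G x)).fst = x.fst
      rw [blockOp_fst, hG_def, blockOp_fst, blockOp_snd]
      simp only [ContinuousLinearMap.add_apply, ContinuousLinearMap.neg_apply,
        ContinuousLinearMap.comp_apply, map_add, map_neg]
      rw [hAw (S' x.fst), hAw (S' (B (D' x.snd)))]
      simp only [hSS', hDD']
      abel
    · show (blockOp A B Bt D (G x)).snd = x.snd
      rw [blockOp_snd, hG_def, blockOp_fst, blockOp_snd]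
      simp only [ContinuousLinearMap.add_apply, ContinuousLinearMap.neg_apply,
        ContinuousLinearMap.comp_apply, map_add, map_neg]
      simp only [hDD']
      abel
  have h2 : G * blockOp A B Bt D = 1 := by
    refine ContinuousLinearMap.ext fun x => (WithLp.ext_iff 2).2 (Prod.ext ?_ ?_)
    · show (G (blockOp A B Bt D x)).fst = x.fst
      rw [hG_def, blockOp_fst, blockOp_fst, blockOp_snd]
      simp only [ContinuousLinearMap.add_apply, ContinuousLinearMap.neg_apply,
        ContinuousLinearMap.comp_apply, map_add, map_neg]
      rw [hAw x.fst]
      simp only [hS'S, hD'D, map_add]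
      abel
    · show (G (blockOp A B Bt D x)).snd = x.snd
      rw [hG_def, blockOp_snd, blockOp_fst, blockOp_snd]
      simp only [ContinuousLinearMap.add_apply, ContinuousLinearMap.neg_apply,
        ContinuousLinearMap.comp_apply, map_add, map_neg]
      rw [hAw x.fst]
      simp only [hS'S, hD'D, map_add]
      abel
  -- hence Ring.inverse of the block operator is G
  have hRH : Ring.inverse (blockOp A B Bt D) = G := by
    have hu : IsUnit (blockOp A B Bt D) := ⟨⟨blockOp A B Bt D, G, h1, h2⟩, rfl⟩
    rw [← hu.unit_spec, Ring.inverse_unit]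
    have := hu.unit.mul_inv
    rw [hu.unit_spec] at this
    calc (hu.unit⁻¹ : _).val = 1 * (hu.unit⁻¹ : _).val := (one_mul _).symm
      _ = G * (blockOp A B Bt D * (hu.unit⁻¹ : _).val) := by rw [← mul_assoc, h2]
      _ = G := by rw [this, mul_one]
  -- norm bound for G
  have hnQ : ‖-(S' ∘L (B ∘L D'))‖ ≤ b/Δ := by
    rw [norm_neg]
    calc ‖S' ∘L (B ∘L D')‖ ≤ (d/Δ) * (b * d⁻¹) :=
          aux_comp_norm_le _ _ hnS' (aux_comp_norm_le _ _ hb_def.ge hnD'.le)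
      _ = b/Δ := by field_simp
  have hnR : ‖-(D' ∘L (Bt ∘L S'))‖ ≤ b/Δ := by
    rw [norm_neg]
    calc ‖D' ∘L (Bt ∘L S')‖ ≤ d⁻¹ * (b * (d/Δ)) :=
          aux_comp_norm_le _ _ hnD'.le (aux_comp_norm_le _ _ hnBt.le hnS')
      _ = b/Δ := by field_simp
  have hnT : ‖D' + D' ∘L (Bt ∘L (S' ∘L (B ∘L D')))‖ ≤ a/Δ := by
    calc ‖D' + D' ∘L (Bt ∘L (S' ∘L (B ∘L D')))‖
        ≤ ‖D'‖ + ‖D' ∘L (Bt ∘L (S' ∘L (B ∘L D')))‖ := norm_add_le _ _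
      _ ≤ d⁻¹ + d⁻¹ * (b * ((d/Δ) * (b * d⁻¹))) := by
          refine add_le_add hnD'.le ?_
          exact aux_comp_norm_le _ _ hnD'.le (aux_comp_norm_le _ _ hnBt.le
            (aux_comp_norm_le _ _ hnS' (aux_comp_norm_le _ _ hb_def.ge hnD'.le)))
      _ = a/Δ := by
          have hne : a*d - b^2 ≠ 0 := by rw [← hΔ_def]; exact hΔ0
          rw [hΔ_def]
          field_simp
          have hne' : -b^2 + d*a ≠ 0 := by intro h; apply hne; linarith
          have key : (d*a) * (-b^2+d*a)⁻¹ - b^2 * (-b^2+d*a)⁻¹ = 1 := by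
            rw [← sub_mul, show d*a - b^2 = -b^2 + d*a by ring, mul_inv_cancel₀ hne']
          linear_combination -key
  have hkey : ∀ p q : ℝ, 0 ≤ p → 0 ≤ q →
      ((d/Δ)*p + (b/Δ)*q)^2 + ((b/Δ)*p + (a/Δ)*q)^2
        ≤ ((a - s*b)⁻¹)^2*(p^2+q^2) := by
    intro p q hp hq
    have hk := aux_key a d b p q ha hAD hb hp hq
    rw [← hs_def, ← hΔ_def] at hk
    have e1 : ((d/Δ)*p + (b/Δ)*q)^2 + ((b/Δ)*p + (a/Δ)*q)^2
        = ((d*p+b*q)^2 + (b*p+a*q)^2)/Δ^2 := by field_simp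
    rw [e1, div_le_iff₀ (pow_pos hΔ 2)]
    have ht0 : (0:ℝ) < a - s*b := by linarith
    have ht0' : a - s*b ≠ 0 := ne_of_gt ht0
    calc (d*p+b*q)^2 + (b*p+a*q)^2
        = ((a - s*b)⁻¹)^2 * ((a - s*b)^2 * ((d*p+b*q)^2 + (b*p+a*q)^2)) := by
          field_simp
          exact (mul_div_cancel_right₀ _ (by rwa [mul_comm b s])).symm
      _ ≤ ((a - s*b)⁻¹)^2 * (Δ^2*(p^2+q^2)) := by
          exact mul_le_mul_of_nonneg_left hk (by positivity)
      _ = ((a - s*b)⁻¹)^2*(p^2+q^2)*Δ^2 := by ring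
  have hnG : ‖G‖ ≤ (a - s*b)⁻¹ := by
    rw [hG_def]
    exact blockOp_bound _ _ _ _ hnS' hnQ hnR hnT (inv_nonneg.2 (le_of_lt (by linarith))) hkey
  -- conclude
  have hGpos : 0 < ‖G‖ := by
    rcases (norm_nonneg G).eq_or_lt with h | h
    · exfalso
      have hG0 : G = 0 := by rwa [eq_comm, norm_eq_zero] at h
      have hid : (1 : WithLp 2 (H × K) →L[ℂ] WithLp 2 (H × K)) = 0 := by
        rw [← h1, hG0, mul_zero]
      have hz : ∀ z : H, z = 0 := fun z => by
        have := ContinuousLinearMap.ext_iff.mp hid ((WithLp.equiv 2 (H × K)).symm (z, 0))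
        rw [ContinuousLinearMap.one_apply, ContinuousLinearMap.zero_apply] at this
        simpa using congrArg WithLp.fst this
      have hRA0 : Ring.inverse A = 0 :=
        ContinuousLinearMap.ext fun z => by
          rw [ContinuousLinearMap.zero_apply]; exact hz _
      have : a = 0 := by
        rw [ha_def, show gap A = ‖Ring.inverse A‖⁻¹ from rfl, hRA0, norm_zero, inv_zero]
      linarith
    · exact h
  show a - s*b ≤ ‖Ring.inverse (blockOp A B Bt D)‖⁻¹
  rw [hRH]
  calc a - s*b = ((a - s*b)⁻¹)⁻¹ := (inv_inv _).symm
    _ ≤ ‖G‖⁻¹ := inv_anti₀ hGpos hnG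
end

section
/- Let H_s = [[A, sB],[sB*, D]] for s ∈ [0,1] be self-adjoint block operators with H₁ invertible. If gap(D) > ‖B‖·max(1, ‖B‖/((1/4)·gap(H₁))), then H_s is invertible for all s ∈ [0,1]. -/
open ContinuousLinearMap

variable {H K : Type*} [NormedAddCommGroup H] [InnerProductSpace ℂ H] [CompleteSpace H]
  [NormedAddCommGroup K] [InnerProductSpace ℂ K] [CompleteSpace K]

set_option linter.unusedSectionVars false

lemma blockOp_ext {T T' : WithLp 2 (H × K) →L[ℂ] WithLp 2 (H × K)}
    (h1 : ∀ x : WithLp 2 (H × K), (T x).fst = (T' x).fst)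
    (h2 : ∀ x : WithLp 2 (H × K), (T x).snd = (T' x).snd) : T = T' := by
  ext x
  exact WithLp.ofLp_injective 2 (Prod.ext (h1 x) (h2 x))

lemma blockOp_mul (A A' : H →L[ℂ] H) (B B' : K →L[ℂ] H) (C C' : H →L[ℂ] K) (D D' : K →L[ℂ] K) :
    blockOp A B C D * blockOp A' B' C' D' =
      blockOp (A ∘L A' + B ∘L C') (A ∘L B' + B ∘L D') (C ∘L A' + D ∘L C') (C ∘L B' + D ∘L D') := by
  refine blockOp_ext (fun x => ?_) (fun x => ?_) <;>
    simp [mul_apply, blockOp_fst, blockOp_snd, map_add] <;> abel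

lemma blockOp_one : blockOp (1 : H →L[ℂ] H) 0 0 (1 : K →L[ℂ] K) = 1 := by
  refine blockOp_ext (fun x => ?_) (fun x => ?_) <;> simp [blockOp_fst, blockOp_snd, one_apply]

lemma isUnit_blockOp_triu (X : K →L[ℂ] H) : IsUnit (blockOp 1 X 0 1) := by
  refine ⟨⟨blockOp 1 X 0 1, blockOp 1 (-X) 0 1, ?_, ?_⟩, rfl⟩ <;>
    rw [blockOp_mul, ← blockOp_one] <;> congr 1 <;> simp [one_def]

lemma isUnit_blockOp_tril (X : H →L[ℂ] K) : IsUnit (blockOp 1 0 X 1) := by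
  refine ⟨⟨blockOp 1 0 X 1, blockOp 1 0 (-X) 1, ?_, ?_⟩, rfl⟩ <;>
    rw [blockOp_mul, ← blockOp_one] <;> congr 1 <;> simp [one_def]

lemma blockOp_factor (A : H →L[ℂ] H) (B : K →L[ℂ] H) (C : H →L[ℂ] K) (D : K →L[ℂ] K)
    (hDu : IsUnit D) :
    blockOp A B C D =
      blockOp 1 (B ∘L Ring.inverse D) 0 1 *
        blockOp (A - B ∘L Ring.inverse D ∘L C) 0 0 D *
        blockOp 1 0 (Ring.inverse D ∘L C) 1 := by
  have h1 : D ∘L Ring.inverse D = 1 := Ring.mul_inverse_cancel D hDu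
  have h2 : Ring.inverse D ∘L D = 1 := Ring.inverse_mul_cancel D hDu
  have h1' : ∀ (Z : H →L[ℂ] K), D ∘L (Ring.inverse D ∘L Z) = Z := fun Z => by
    rw [← comp_assoc, h1, one_def, id_comp]
  have h2' : ∀ (Z : H →L[ℂ] K), Ring.inverse D ∘L (D ∘L Z) = Z := fun Z => by
    rw [← comp_assoc, h2, one_def, id_comp]
  rw [blockOp_mul, blockOp_mul]
  congr 1 <;>
    simp [one_def, comp_sub, sub_comp, comp_add, add_comp, comp_assoc, h1, h2, h1', h2']

noncomputable def inlL : H →L[ℂ] WithLp 2 (H × K) :=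
  ((WithLp.prodContinuousLinearEquiv 2 ℂ H K).symm : H × K →L[ℂ] WithLp 2 (H × K)) ∘L
    ContinuousLinearMap.inl ℂ H K

noncomputable def fstL : WithLp 2 (H × K) →L[ℂ] H :=
  ContinuousLinearMap.fst ℂ H K ∘L
    ((WithLp.prodContinuousLinearEquiv 2 ℂ H K) : WithLp 2 (H × K) →L[ℂ] H × K)

lemma fstL_apply (x : WithLp 2 (H × K)) : fstL x = x.fst := rfl

lemma inlL_fst (x : H) : ((inlL x : WithLp 2 (H × K))).fst = x := rfl
lemma inlL_snd (x : H) : ((inlL x : WithLp 2 (H × K))).snd = 0 := rfl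

lemma norm_inlL (x : H) : ‖(inlL x : WithLp 2 (H × K))‖ = ‖x‖ := by
  have : (inlL x : WithLp 2 (H × K)) = (WithLp.equiv 2 (H × K)).symm (x, 0) := rfl
  rw [this]; exact WithLp.norm_toLp_fst 2 H K x

lemma norm_fstL_le (x : WithLp 2 (H × K)) : ‖fstL x‖ ≤ ‖x‖ := by
  rw [fstL_apply]
  have h := WithLp.prod_norm_sq_eq_of_L2 x
  nlinarith [norm_nonneg x.fst, norm_nonneg x.snd, norm_nonneg x, sq_nonneg ‖x.snd‖]

lemma isUnit_of_blockOp_diag {S : H →L[ℂ] H} {D : K →L[ℂ] K}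
    (h : IsUnit (blockOp S 0 0 D)) : IsUnit S := by
  rcases h with ⟨u, hu⟩
  set M : WithLp 2 (H × K) →L[ℂ] WithLp 2 (H × K) := ↑u⁻¹ with hM
  have hNM : ∀ y, blockOp S 0 0 D (M y) = y := by
    intro y
    have : (↑u * ↑u⁻¹ : WithLp 2 (H × K) →L[ℂ] WithLp 2 (H × K)) = 1 := u.mul_inv
    rw [hu] at this
    calc blockOp S 0 0 D (M y) = (blockOp S 0 0 D * M) y := rfl
    _ = y := by rw [hM, this]; rfl
  have hMN : ∀ y, M (blockOp S 0 0 D y) = y := by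
    intro y
    have : (↑u⁻¹ * ↑u : WithLp 2 (H × K) →L[ℂ] WithLp 2 (H × K)) = 1 := u.inv_mul
    rw [hu] at this
    calc M (blockOp S 0 0 D y) = (M * blockOp S 0 0 D) y := rfl
    _ = y := by rw [hM, this]; rfl
  refine ⟨⟨S, fstL ∘L M ∘L inlL, ?_, ?_⟩, rfl⟩
  · ext x
    have h1 : blockOp S 0 0 D (inlL x) = inlL (S x) := by
      refine WithLp.ofLp_injective 2 (Prod.ext ?_ ?_) <;> simp [blockOp_fst, blockOp_snd, inlL_fst, inlL_snd]
    calc (S * (fstL ∘L M ∘L inlL)) x = S (fstL (M (inlL x))) := rfl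
    _ = fstL (blockOp S 0 0 D (M (inlL x))) := by
        simp [fstL_apply, blockOp_fst]
    _ = fstL (inlL x) := by rw [hNM]
    _ = x := rfl
  · ext x
    have h1 : blockOp S 0 0 D (inlL x) = inlL (S x) := by
      refine WithLp.ofLp_injective 2 (Prod.ext ?_ ?_) <;> simp [blockOp_fst, blockOp_snd, inlL_fst, inlL_snd]
    calc ((fstL ∘L M ∘L inlL) * S) x = fstL (M (inlL (S x))) := rfl
    _ = fstL (M (blockOp S 0 0 D (inlL x))) := by rw [h1]
    _ = fstL (inlL x) := by rw [hMN]
    _ = x := rfl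

lemma isUnit_blockOp_diag {S : H →L[ℂ] H} {D : K →L[ℂ] K} (hS : IsUnit S) (hDu : IsUnit D) :
    IsUnit (blockOp S 0 0 D) := by
  refine ⟨⟨blockOp S 0 0 D, blockOp (Ring.inverse S) 0 0 (Ring.inverse D), ?_, ?_⟩, rfl⟩ <;>
    rw [blockOp_mul, ← blockOp_one] <;> congr 1 <;>
      simp only [comp_zero, zero_comp, add_zero, zero_add, ← mul_def,
        Ring.mul_inverse_cancel _ hS, Ring.mul_inverse_cancel _ hDu,
        Ring.inverse_mul_cancel _ hS, Ring.inverse_mul_cancel _ hDu]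

lemma isUnit_mul_mul_iff {M : Type*} [Monoid M] {u m v : M} (hu : IsUnit u) (hv : IsUnit v) :
    IsUnit (u * m * v) ↔ IsUnit m := by
  constructor
  · intro h
    have hm : ↑hu.unit⁻¹ * (u * m * v) * ↑hv.unit⁻¹ = m := by
      rw [show ↑hu.unit⁻¹ * (u * m * v) * ↑hv.unit⁻¹
          = (↑hu.unit⁻¹ * u) * (m * (v * ↑hv.unit⁻¹)) from by simp only [mul_assoc],
        hu.val_inv_mul, hv.mul_val_inv, one_mul, mul_one]
    rw [← hm]
    exact ((hu.unit⁻¹.isUnit.mul h).mul hv.unit⁻¹.isUnit)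
  · intro h
    exact (hu.mul h).mul hv

lemma isUnit_blockOp_iff_schur (A : H →L[ℂ] H) (B : K →L[ℂ] H) (C : H →L[ℂ] K) (D : K →L[ℂ] K)
    (hDu : IsUnit D) :
    IsUnit (blockOp A B C D) ↔ IsUnit (A - B ∘L Ring.inverse D ∘L C) := by
  rw [blockOp_factor A B C D hDu,
    isUnit_mul_mul_iff (isUnit_blockOp_triu _) (isUnit_blockOp_tril _)]
  constructor
  · exact isUnit_of_blockOp_diag
  · intro h; exact isUnit_blockOp_diag h hDu

lemma norm_schur_inverse_le (A : H →L[ℂ] H) (B : K →L[ℂ] H) (C : H →L[ℂ] K) (D : K →L[ℂ] K)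
    (hDu : IsUnit D) (hN : IsUnit (blockOp A B C D)) :
    ‖Ring.inverse (A - B ∘L Ring.inverse D ∘L C)‖ ≤ ‖Ring.inverse (blockOp A B C D)‖ := by
  set D' := Ring.inverse D with hD'
  set S := A - B ∘L D' ∘L C with hSdef
  have hS : IsUnit S := (isUnit_blockOp_iff_schur A B C D hDu).mp hN
  set S' := Ring.inverse S with hS'
  -- units
  have hMd : IsUnit (blockOp S 0 0 D) := isUnit_blockOp_diag hS hDu
  set Lu : (WithLp 2 (H × K) →L[ℂ] WithLp 2 (H × K))ˣ :=
    ⟨blockOp 1 (B ∘L D') 0 1, blockOp 1 (-(B ∘L D')) 0 1,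
      by rw [blockOp_mul, ← blockOp_one]; congr 1 <;> simp [one_def],
      by rw [blockOp_mul, ← blockOp_one]; congr 1 <;> simp [one_def]⟩ with hLu
  set Ru : (WithLp 2 (H × K) →L[ℂ] WithLp 2 (H × K))ˣ :=
    ⟨blockOp 1 0 (D' ∘L C) 1, blockOp 1 0 (-(D' ∘L C)) 1,
      by rw [blockOp_mul, ← blockOp_one]; congr 1 <;> simp [one_def],
      by rw [blockOp_mul, ← blockOp_one]; congr 1 <;> simp [one_def]⟩ with hRu
  set Mu : (WithLp 2 (H × K) →L[ℂ] WithLp 2 (H × K))ˣ :=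
    ⟨blockOp S 0 0 D, blockOp S' 0 0 D',
      by rw [blockOp_mul, ← blockOp_one]; congr 1 <;>
        simp only [comp_zero, zero_comp, add_zero, zero_add, ← mul_def,
          hS', hD', Ring.mul_inverse_cancel _ hS, Ring.mul_inverse_cancel _ hDu],
      by rw [blockOp_mul, ← blockOp_one]; congr 1 <;>
        simp only [comp_zero, zero_comp, add_zero, zero_add, ← mul_def,
          hS', hD', Ring.inverse_mul_cancel _ hS, Ring.inverse_mul_cancel _ hDu]⟩ with hMu
  have hval : ((Lu * Mu * Ru : _ˣ) : WithLp 2 (H × K) →L[ℂ] WithLp 2 (H × K)) =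
      blockOp A B C D := by
    rw [Units.val_mul, Units.val_mul, hLu, hMu, hRu]
    exact (blockOp_factor A B C D hDu).symm
  have hinvN : Ring.inverse (blockOp A B C D) =
      blockOp 1 0 (-(D' ∘L C)) 1 * blockOp S' 0 0 D' * blockOp 1 (-(B ∘L D')) 0 1 := by
    rw [← hval, Ring.inverse_unit, mul_inv_rev, mul_inv_rev, Units.val_mul, Units.val_mul]
    rfl
  have key : ∀ x : H, (Ring.inverse (blockOp A B C D) (inlL x : WithLp 2 (H × K))).fst
      = S' x := by
    intro x
    rw [hinvN]
    have e1 : blockOp 1 (-(B ∘L D')) 0 1 (inlL x : WithLp 2 (H × K)) = inlL x := by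
      refine WithLp.ofLp_injective 2 (Prod.ext ?_ ?_) <;> simp [blockOp_fst, blockOp_snd, inlL_fst, inlL_snd, one_def]
    have e2 : blockOp S' 0 0 D' (inlL x : WithLp 2 (H × K)) = inlL (S' x) := by
      refine WithLp.ofLp_injective 2 (Prod.ext ?_ ?_) <;> simp [blockOp_fst, blockOp_snd, inlL_fst, inlL_snd]
    have e3 : (blockOp 1 0 (-(D' ∘L C)) 1 * blockOp S' 0 0 D' * blockOp 1 (-(B ∘L D')) 0 1)
          (inlL x : WithLp 2 (H × K))
        = blockOp 1 0 (-(D' ∘L C)) 1 (inlL (S' x) : WithLp 2 (H × K)) := by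
      show blockOp 1 0 (-(D' ∘L C)) 1 (blockOp S' 0 0 D' (blockOp 1 (-(B ∘L D')) 0 1
            (inlL x : WithLp 2 (H × K)))) = _
      rw [e1, e2]
    rw [e3]
    simp [blockOp_fst, inlL_fst, inlL_snd, one_def]
  refine ContinuousLinearMap.opNorm_le_bound _ (norm_nonneg _) fun x => ?_
  calc ‖S' x‖ = ‖(Ring.inverse (blockOp A B C D) (inlL x : WithLp 2 (H × K))).fst‖ := by
        rw [key]
    _ ≤ ‖Ring.inverse (blockOp A B C D) (inlL x : WithLp 2 (H × K))‖ := by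
        rw [← fstL_apply]; exact norm_fstL_le _
    _ ≤ ‖Ring.inverse (blockOp A B C D)‖ * ‖(inlL x : WithLp 2 (H × K))‖ := le_opNorm _ _
    _ = ‖Ring.inverse (blockOp A B C D)‖ * ‖x‖ := by rw [norm_inlL]

/-- Decoupling lemma: for `H_s = [[A, sB],[sB*, D]]` with `H_1` invertible and
`gap(D) > ‖B‖·max(1, ‖B‖/((1/4)·gap H_1))`, every `H_s`, `s ∈ [0,1]`, is invertible. -/
theorem block_invertible_cut (A : H →L[ℂ] H) (D : K →L[ℂ] K) (B : K →L[ℂ] H)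
    (hA : IsSelfAdjoint A) (hD : IsSelfAdjoint D) (hDu : IsUnit D)
    (hH1 : IsUnit (blockOp A B (ContinuousLinearMap.adjoint B) D))
    (hgapD : ‖B‖ * max 1 (‖B‖ / ((1 / 4) * gap (blockOp A B (ContinuousLinearMap.adjoint B) D)))
      < gap D) :
    ∀ s ∈ Set.Icc (0 : ℝ) 1,
      IsUnit (blockOp A ((s : ℂ) • B) ((s : ℂ) • ContinuousLinearMap.adjoint B) D) := by
  intro s hs
  obtain ⟨hs0, hs1⟩ := hs
  set C := ContinuousLinearMap.adjoint B with hC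
  set N := blockOp A B C D with hN
  set W := Ring.inverse N with hW
  rw [isUnit_blockOp_iff_schur _ _ _ _ hDu]
  by_cases hdeg : gap N = 0
  · -- degenerate: Ring.inverse N = 0, so 1 = 0 and everything is a unit
    have hW0 : W = 0 := by
      have : ‖W‖⁻¹ = 0 := hdeg
      rcases inv_eq_zero.mp this |> norm_eq_zero.mp with h
      exact h
    have h10 : (0 : WithLp 2 (H × K) →L[ℂ] WithLp 2 (H × K)) = 1 := by
      rw [← Ring.mul_inverse_cancel N hH1, ← hW, hW0, mul_zero]
    haveI : Subsingleton (WithLp 2 (H × K) →L[ℂ] WithLp 2 (H × K)) :=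
      subsingleton_of_zero_eq_one h10
    haveI : Subsingleton (WithLp 2 (H × K)) := by
      constructor
      intro a b
      have := congrArg (fun T : WithLp 2 (H × K) →L[ℂ] WithLp 2 (H × K) => T a)
        (Subsingleton.elim (1 : WithLp 2 (H × K) →L[ℂ] WithLp 2 (H × K)) 0)
      have ha : a = 0 := this
      have := congrArg (fun T : WithLp 2 (H × K) →L[ℂ] WithLp 2 (H × K) => T b)
        (Subsingleton.elim (1 : WithLp 2 (H × K) →L[ℂ] WithLp 2 (H × K)) 0)
      have hb : b = 0 := this
      rw [ha, hb]
    haveI : Subsingleton H := by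
      constructor
      intro a b
      have := Subsingleton.elim (inlL a : WithLp 2 (H × K)) (inlL b)
      have := congrArg (fun y : WithLp 2 (H × K) => y.fst) this
      simpa [inlL_fst] using this
    haveI : Subsingleton (H →L[ℂ] H) := ⟨fun a b => by ext x; exact Subsingleton.elim _ _⟩
    exact isUnit_of_subsingleton _
  · have hgapN : 0 < gap N :=
      lt_of_le_of_ne (inv_nonneg.mpr (norm_nonneg _)) (Ne.symm hdeg)
    by_cases h1H : (1 : H →L[ℂ] H) = 0
    · haveI : Subsingleton (H →L[ℂ] H) := subsingleton_of_zero_eq_one h1H.symm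
      exact isUnit_of_subsingleton _
    haveI : Nontrivial (H →L[ℂ] H) := ⟨⟨1, 0, h1H⟩⟩
    set D' := Ring.inverse D with hD'
    have hS1 : IsUnit (A - B ∘L D' ∘L C) := (isUnit_blockOp_iff_schur A B C D hDu).mp hH1
    set T := B ∘L D' ∘L C with hT
    set u := hS1.unit with hu
    -- norm bounds
    have hgapD0 : 0 < gap D := by
      refine lt_of_le_of_lt ?_ hgapD
      positivity
    have hD'norm : ‖D'‖ = (gap D)⁻¹ := by
      rw [gap, ← hD', inv_inv]
    have hTnorm : ‖T‖ ≤ ‖B‖ ^ 2 * ‖D'‖ := by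
      have h1 : ‖T‖ ≤ ‖B‖ * ‖D' ∘L C‖ := opNorm_comp_le _ _
      have h2 : ‖D' ∘L C‖ ≤ ‖D'‖ * ‖C‖ := opNorm_comp_le _ _
      have h3 : ‖C‖ = ‖B‖ := by rw [hC]; exact LinearIsometryEquiv.norm_map _ B
      calc ‖T‖ ≤ ‖B‖ * ‖D' ∘L C‖ := h1
        _ ≤ ‖B‖ * (‖D'‖ * ‖C‖) := by gcongr
        _ = ‖B‖ ^ 2 * ‖D'‖ := by rw [h3]; ring
    have hBD : ‖B‖ ^ 2 * ‖D'‖ < gap N := by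
      rcases eq_or_lt_of_le (norm_nonneg B) with hB0 | hB0
      · rw [← hB0]; simpa using hgapN
      · have h1 : ‖B‖ * (‖B‖ / ((1 / 4) * gap N)) < gap D :=
          lt_of_le_of_lt (mul_le_mul_of_nonneg_left (le_max_right _ _) (norm_nonneg B)) hgapD
        have h4 : (0:ℝ) < (1 / 4) * gap N := by linarith
        have h2 : ‖B‖ * ‖B‖ < gap D * ((1 / 4) * gap N) := by
          rw [mul_div_assoc'] at h1
          exact (div_lt_iff₀ h4).mp h1
        have h7 : ‖B‖ ^ 2 * (gap D)⁻¹ < (1 / 4) * gap N := by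
          rw [sq, ← div_eq_mul_inv]
          exact (div_lt_iff₀ hgapD0).mpr (by linarith)
        rw [hD'norm]
        linarith
    -- the perturbation
    have hcomp : ((s : ℂ) • B) ∘L (D' ∘L ((s : ℂ) • C)) = ((s : ℂ) * (s : ℂ)) • T := by
      simp only [hT, comp_smul, smul_comp, smul_smul]
    have hsplit : A - ((s : ℂ) • B) ∘L (D' ∘L ((s : ℂ) • C))
        = (A - T) + ((1 : ℂ) - (s : ℂ) * (s : ℂ)) • T := by
      rw [hcomp]
      module
    have hcnorm : ‖((1 : ℂ) - (s : ℂ) * (s : ℂ)) • T‖ ≤ ‖T‖ := by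
      rw [norm_smul]
      have : ((1 : ℂ) - (s : ℂ) * (s : ℂ)) = ((1 - s * s : ℝ) : ℂ) := by push_cast; ring
      rw [this, Complex.norm_real, Real.norm_eq_abs]
      have hss : s * s ≤ 1 := mul_le_one₀ hs1 hs0 hs1
      have hss0 : 0 ≤ s * s := mul_nonneg hs0 hs0
      have habs : |1 - s * s| ≤ 1 := by
        rw [abs_le]; constructor <;> linarith
      exact mul_le_of_le_one_left (norm_nonneg T) habs
    have hWpos : 0 < ‖W‖ := by
      by_contra hc
      push_neg at hc
      have : ‖W‖ = 0 := le_antisymm hc (norm_nonneg _)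
      rw [gap, ← hW, this] at hgapN
      simp at hgapN
    have huinv : ‖(↑u⁻¹ : H →L[ℂ] H)‖ ≤ ‖W‖ := by
      have h1 : Ring.inverse (A - B ∘L D' ∘L C) = (↑u⁻¹ : H →L[ℂ] H) := by
        conv_lhs => rw [show A - B ∘L D' ∘L C = ↑hS1.unit from hS1.unit_spec.symm]
        rw [Ring.inverse_unit]
      rw [← h1, hW, hN, hD']
      exact norm_schur_inverse_le A B C D hDu hH1
    have hfin : ‖((1 : ℂ) - (s : ℂ) * (s : ℂ)) • T‖ < ‖(↑u⁻¹ : H →L[ℂ] H)‖⁻¹ := by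
      have hup : 0 < ‖(↑u⁻¹ : H →L[ℂ] H)‖ := Units.norm_pos u⁻¹
      have : gap N ≤ ‖(↑u⁻¹ : H →L[ℂ] H)‖⁻¹ := by
        rw [gap, ← hW]
        exact inv_anti₀ hup huinv
      calc ‖((1 : ℂ) - (s : ℂ) * (s : ℂ)) • T‖ ≤ ‖T‖ := hcnorm
        _ ≤ ‖B‖ ^ 2 * ‖D'‖ := hTnorm
        _ < gap N := hBD
        _ ≤ _ := this
    have hdist : ‖(A - ((s : ℂ) • B) ∘L (D' ∘L ((s : ℂ) • C))) - ↑u‖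
        < ‖(↑u⁻¹ : H →L[ℂ] H)‖⁻¹ := by
      have : (A - ((s : ℂ) • B) ∘L (D' ∘L ((s : ℂ) • C))) - ↑u
          = ((1 : ℂ) - (s : ℂ) * (s : ℂ)) • T := by
        rw [hsplit, hu, hS1.unit_spec, add_sub_cancel_left]
      rw [this]
      exact hfin
    have := (Units.ofNearby u _ hdist).isUnit
    simpa using this
end
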